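/- Let k ≥ 2 be an integer and let G be a graph equipped with a k-precentral function γ. There exists a k-star decomposition of G in which exactly γ(x) of the stars are centred at x for each vertex x of G if and only if Δ_T ≥ 0 for every subset T of V(G), where Δ_T = |E_T| − k·Σ_{x∈T} γ(x) and E_T is the set of edges of G incident with at least one vertex of T. -/

import Mathlib

/-- The star with centre `c` and leaf set `Lf` is a `k`-star in `G`. -/
def IsStarIn {V : Type*} (G : SimpleGraph V) (k : ℕ) (c : V) (Lf : Finset V) : Prop :=
  Lf.card = k ∧ ∀ v ∈ Lf, G.Adj c v

/-- The edge set of the star with centre `c` and leaf set `Lf`. -/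
def starEdges {V : Type*} [DecidableEq V] (c : V) (Lf : Finset V) : Finset (Sym2 V) :=
  Lf.image (fun v => s(c, v))

/-- A partial `k`-star decomposition of `G`: a set of `k`-stars of `G` whose edge sets are
pairwise disjoint. -/
def IsPartialStarDecompOn {V : Type*} [DecidableEq V] (G : SimpleGraph V) (k : ℕ)
    (D : Finset (V × Finset V)) : Prop :=
  (∀ p ∈ D, IsStarIn G k p.1 p.2) ∧
  (∀ p ∈ D, ∀ q ∈ D, p ≠ q → Disjoint (starEdges p.1 p.2) (starEdges q.1 q.2))

/-- A `k`-star decomposition of `G`: a partial one whose stars' edge sets cover `E(G)`. -/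
def IsStarDecompOn {V : Type*} [DecidableEq V] (G : SimpleGraph V) (k : ℕ)
    (D : Finset (V × Finset V)) : Prop :=
  IsPartialStarDecompOn G k D ∧ ∀ e ∈ G.edgeSet, ∃ p ∈ D, e ∈ starEdges p.1 p.2

/-- The leave of a partial star decomposition `D` of `G`: the graph on `V(G)` consisting of
the edges of `G` lying in no star of `D`. -/
def leaveOf {V : Type*} [DecidableEq V] (G : SimpleGraph V) (D : Finset (V × Finset V)) :
    SimpleGraph V :=
  G.deleteEdges ↑(D.biUnion fun p => starEdges p.1 p.2)

/-- The join `L ∨ K_s` of `L` with a complete graph on `s` new vertices. -/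
def joinK {V : Type*} (L : SimpleGraph V) (s : ℕ) : SimpleGraph (V ⊕ Fin s) where
  Adj x y := x ≠ y ∧ ∀ a b, x = Sum.inl a → y = Sum.inl b → L.Adj a b
  symm := by
    constructor
    rintro x y ⟨hxy, h⟩
    exact ⟨hxy.symm, fun a b ha hb => (h b a hb ha).symm⟩
  loopless := by constructor; rintro x ⟨h, -⟩; exact h rfl

/-- The independence number `α(L)` of a graph `L`. -/
noncomputable def indepNumber {V : Type*} [Fintype V] (L : SimpleGraph V) : ℕ :=
  sSup {m : ℕ | ∃ t : Finset V, t.card = m ∧ ∀ x ∈ t, ∀ y ∈ t, x ≠ y → ¬ L.Adj x y}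

/-- Push a star on `Fin n` forward to `Fin N` along the canonical inclusion. -/
def castStar {n N : ℕ} (h : n ≤ N) (p : Fin n × Finset (Fin n)) :
    Fin N × Finset (Fin N) :=
  (Fin.castLE h p.1, p.2.image (Fin.castLE h))

/-- The partial `k`-star decomposition `A` of `K_n` can be embedded in a `k`-star
decomposition of `K_{n+s}`. -/
def EmbedsIn (k n s : ℕ) (A : Finset (Fin n × Finset (Fin n))) : Prop :=
  ∃ B : Finset (Fin (n + s) × Finset (Fin (n + s))),
    IsStarDecompOn (⊤ : SimpleGraph (Fin (n + s))) k B ∧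
    A.image (castStar (Nat.le_add_right n s)) ⊆ B

/-- `Δ_T = |E_T| - k·∑_{x∈T} γ(x)`, where `E_T` is the set of edges of `G` incident with at
least one vertex of `T`. -/
noncomputable def starDelta {V : Type*} (G : SimpleGraph V) (k : ℕ) (γ : V → ℕ)
    (T : Finset V) : ℤ :=
  ({e ∈ G.edgeSet | ∃ v ∈ T, v ∈ e}.ncard : ℤ) - k * ∑ x ∈ T, γ x


/-!
Necessity: the stars centred in `T` are `∑_{x ∈ T} γ x` edge-disjoint `k`-stars, all of whose
edges meet `T`. Sufficiency is Hakimi's orientation theorem: by Hall's theorem, matching each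
edge to one of `k * γ x` slots at one of its ends, the condition `Δ_T ≥ 0` lets us orient every
edge towards an end `x` so that exactly `k * γ x` edges point to each `x`. The edges pointing to
`x` are then cut into `γ x` stars of size `k` centred at `x`.
-/

open Finset

theorem Finpartition.exists_card_parts_eq_of_card_eq_mul {α : Type*} [DecidableEq α]
    {s : Finset α} {k m : ℕ} (hk : k ≠ 0) (hs : #s = k * m) :
    ∃ P : Finpartition s, #P.parts = m ∧ ∀ t ∈ P.parts, #t = k := by
  have h : m * k + 0 * (k + 1) = #s := by rw [hs, zero_mul, add_zero, mul_comm]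
  set P := (⊥ : Finpartition s).equitabilise h
  have hsize : ∀ t ∈ P.parts, #t = k := fun t ht =>
    (card_eq_of_mem_parts_equitabilise ht).resolve_right fun hbig => by
      have hempty : #{u ∈ P.parts | #u = k + 1} = 0 := card_filter_equitabilise_big ⊥ h
      have := card_pos.2 ⟨t, (mem_filter.2 ⟨ht, hbig⟩ : t ∈ {u ∈ P.parts | #u = k + 1})⟩
      omega
  refine ⟨P, ?_, hsize⟩
  have hsmall : #{u ∈ P.parts | #u = k} = m := card_filter_equitabilise_small ⊥ h hk
  rwa [filter_true_of_mem hsize] at hsmall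

theorem Finset.card_fiber_eq_of_le_of_sum_eq {ι V : Type*} [Fintype V] [DecidableEq V]
    {s : Finset ι} {f : ι → V} {c : V → ℕ} (hle : ∀ x, #{i ∈ s | f i = x} ≤ c x)
    (hsum : ∑ x, c x = #s) (x : V) : #{i ∈ s | f i = x} = c x := by
  have hfib : ∑ x, #{i ∈ s | f i = x} = ∑ x, c x := by
    rw [hsum, card_eq_sum_card_fiberwise (f := f) (t := univ) fun _ _ => mem_univ _]
  exact (sum_eq_sum_iff_of_le fun x _ => hle x).mp hfib x (mem_univ x)

section StarEdges

variable {V : Type*} [DecidableEq V]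

lemma mem_starEdges {c : V} {L : Finset V} {e : Sym2 V} :
    e ∈ starEdges c L ↔ ∃ v ∈ L, s(c, v) = e :=
  mem_image

lemma card_starEdges (c : V) (L : Finset V) : #(starEdges c L) = #L :=
  card_image_of_injective _ fun _ _ => Sym2.congr_right.mp

end StarEdges

namespace SimpleGraph

variable {V : Type*} [DecidableEq V] (G : SimpleGraph V)

/-- The set `E_T` of the statement. -/
def edgesMeeting [Fintype G.edgeSet] (T : Finset V) : Finset (Sym2 V) :=
  {e ∈ G.edgeFinset | ∃ v ∈ T, v ∈ e}

lemma starDelta_nonneg_iff [Fintype G.edgeSet] (k : ℕ) (γ : V → ℕ) (T : Finset V) :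
    0 ≤ starDelta G k γ T ↔ k * ∑ x ∈ T, γ x ≤ #(G.edgesMeeting T) := by
  have hET : {e ∈ G.edgeSet | ∃ v ∈ T, v ∈ e} = ↑(G.edgesMeeting T) := by
    ext; simp [edgesMeeting]
  rw [starDelta, hET, Set.ncard_coe_finset, sub_nonneg]
  norm_cast

variable {G} in
theorem _root_.IsPartialStarDecompOn.starDelta_nonneg [Fintype G.edgeSet] {k : ℕ}
    {γ : V → ℕ} {D : Finset (V × Finset V)} (hD : IsPartialStarDecompOn G k D)
    (hγ : ∀ x, #(D.filter (·.1 = x)) = γ x) (T : Finset V) : 0 ≤ starDelta G k γ T := by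
  obtain ⟨hstar, hdisj⟩ := hD
  rw [starDelta_nonneg_iff]
  set DT := D.filter (·.1 ∈ T)
  have hDT : #DT = ∑ x ∈ T, γ x := by
    rw [card_eq_sum_card_fiberwise (s := DT) (t := T) fun p hp => (mem_filter.1 hp).2]
    refine sum_congr rfl fun x hx => ?_
    rw [← hγ x, filter_filter]
    exact congrArg card (filter_congr fun p _ => ⟨And.right, fun h => ⟨h ▸ hx, h⟩⟩)
  have hedges : DT.biUnion (fun p => starEdges p.1 p.2) ⊆ G.edgesMeeting T := by
    intro e he
    obtain ⟨p, hp, hep⟩ := mem_biUnion.1 he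
    obtain ⟨hpD, hpT⟩ := mem_filter.1 hp
    obtain ⟨v, hv, rfl⟩ := mem_starEdges.1 hep
    exact mem_filter.2
      ⟨G.mem_edgeFinset.2 ((hstar p hpD).2 v hv), p.1, hpT, Sym2.mem_mk_left _ _⟩
  calc k * ∑ x ∈ T, γ x = ∑ p ∈ DT, #(starEdges p.1 p.2) := by
        rw [← hDT, card_eq_sum_ones, mul_sum, mul_one]
        exact sum_congr rfl fun p hp => by
          rw [card_starEdges, (hstar p (filter_subset _ _ hp)).1]
    _ = #(DT.biUnion fun p => starEdges p.1 p.2) :=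
        (card_biUnion fun p hp q hq =>
          hdisj p (filter_subset _ _ hp) q (filter_subset _ _ hq)).symm
    _ ≤ _ := card_le_card hedges

theorem exists_orientation_card_fiber_le [Fintype V] [Fintype G.edgeSet] (c : V → ℕ)
    (hc : ∀ S ⊆ G.edgeFinset, #S ≤ ∑ x ∈ {x | ∃ e ∈ S, x ∈ e}, c x) :
    ∃ o : Sym2 V → V, (∀ e, o e ∈ e) ∧ ∀ x, #{e ∈ G.edgeFinset | o e = x} ≤ c x := by
  classical
  -- Hall's theorem, matching the edges into the slots `⟨x, i⟩` with `i < c x`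
  obtain ⟨f, hf, hfe⟩ := (Fintype.all_card_le_filter_rel_iff_exists_injective
      fun (e : G.edgeSet) (b : Σ x, Fin (c x)) => b.1 ∈ (e : Sym2 V)).1 fun A => by
    have hslots : ({b | ∃ a ∈ A, b.1 ∈ (a : Sym2 V)} : Finset (Σ x, Fin (c x))) =
        ({x | ∃ e ∈ A.map (Function.Embedding.subtype _), x ∈ e} : Finset V).sigma
          fun _ => univ := by
      ext; simp
    rw [hslots, card_sigma]
    simpa using hc (A.map (Function.Embedding.subtype _)) fun e he => by
      obtain ⟨a, -, rfl⟩ := mem_map.1 he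
      exact G.mem_edgeFinset.2 a.2
  refine ⟨fun e => if h : e ∈ G.edgeSet then (f ⟨e, h⟩).1 else e.out.1, fun e => ?_,
    fun x => ?_⟩
  · dsimp only
    split_ifs with h
    exacts [hfe ⟨e, h⟩, e.out_fst_mem]
  · have hslots : #({b | b.1 = x} : Finset (Σ x, Fin (c x))) = c x := by
      have : ({b | b.1 = x} : Finset (Σ x, Fin (c x))) =
          ({x} : Finset V).sigma fun _ => univ := by
        ext; simp
      rw [this, card_sigma, sum_singleton, card_univ, Fintype.card_fin]
    rw [← hslots, ← card_attach]
    refine card_le_card_of_injOn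
      (fun e => f ⟨e.1, G.mem_edgeFinset.1 (mem_filter.1 e.2).1⟩) ?_ ?_
    · rintro ⟨e, he⟩ -
      obtain ⟨he, hox⟩ := mem_filter.1 he
      simpa [dif_pos (G.mem_edgeFinset.1 he)] using hox
    · intro a _ b _ hab
      exact Subtype.ext (congrArg Subtype.val (hf hab) :)

theorem exists_orientation_card_fiber_eq [Fintype V] [Fintype G.edgeSet] (c : V → ℕ)
    (hsum : ∑ x, c x = #G.edgeFinset) (hc : ∀ T, ∑ x ∈ T, c x ≤ #(G.edgesMeeting T)) :
    ∃ o : Sym2 V → V, (∀ e, o e ∈ e) ∧ ∀ x, #{e ∈ G.edgeFinset | o e = x} = c x := by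
  suffices hHall : ∀ S ⊆ G.edgeFinset, #S ≤ ∑ x ∈ {x | ∃ e ∈ S, x ∈ e}, c x by
    obtain ⟨o, ho, hle⟩ := G.exists_orientation_card_fiber_le c hHall
    exact ⟨o, ho, card_fiber_eq_of_le_of_sum_eq hle hsum⟩
  intro S hS
  set U : Finset V := {x | ∃ e ∈ S, x ∈ e}
  have hdisj : Disjoint S (G.edgesMeeting Uᶜ) := by
    refine Finset.disjoint_left.2 fun e he he' => ?_
    obtain ⟨-, v, hv, hve⟩ := mem_filter.1 he'
    exact mem_compl.1 hv (mem_filter.2 ⟨mem_univ v, e, he, hve⟩)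
  have hcover : #S + #(G.edgesMeeting Uᶜ) ≤ #G.edgeFinset := by
    rw [← card_union_of_disjoint hdisj]
    exact card_le_card (union_subset hS (filter_subset _ _))
  have := hc Uᶜ
  have := sum_add_sum_compl U c
  omega

lemma card_edge_fiber_eq_card_out_neighbors [Fintype V] [DecidableRel G.Adj]
    {o : Sym2 V → V} (ho : ∀ e, o e ∈ e) (x : V) :
    #{e ∈ G.edgeFinset | o e = x} = #{v | G.Adj x v ∧ o s(x, v) = x} := by
  suffices h : {e ∈ G.edgeFinset | o e = x} =
      ({v | G.Adj x v ∧ o s(x, v) = x} : Finset V).image (s(x, ·)) by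
    rw [h, card_image_of_injective _ fun _ _ => Sym2.congr_right.mp]
  ext e
  simp only [mem_filter, mem_edgeFinset, mem_image, mem_univ, true_and]
  constructor
  · rintro ⟨he, hox⟩
    obtain ⟨v, rfl⟩ := Sym2.mem_iff_exists.1 (hox ▸ ho e)
    exact ⟨v, ⟨he, hox⟩, rfl⟩
  · rintro ⟨v, ⟨hv, hov⟩, rfl⟩
    exact ⟨hv, hov⟩

theorem exists_starDecomp_of_card_out_neighbors [Fintype V] [DecidableRel G.Adj] {k : ℕ}
    (hk : k ≠ 0) (γ : V → ℕ) (o : Sym2 V → V) (ho : ∀ e, o e ∈ e)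
    (hout : ∀ x, #{v | G.Adj x v ∧ o s(x, v) = x} = k * γ x) :
    ∃ D : Finset (V × Finset V), IsStarDecompOn G k D ∧ ∀ x, #(D.filter (·.1 = x)) = γ x := by
  choose P hPcard hPsize using fun x =>
    Finpartition.exists_card_parts_eq_of_card_eq_mul hk (hout x)
  let D : Finset (V × Finset V) :=
    univ.biUnion fun x => (P x).parts.map ⟨Prod.mk x, Prod.mk_right_injective x⟩
  have hD : ∀ p, p ∈ D ↔ p.2 ∈ (P p.1).parts := by
    rintro ⟨x, L⟩
    simp [D]
  have hleaf : ∀ p ∈ D, ∀ v ∈ p.2, G.Adj p.1 v ∧ o s(p.1, v) = p.1 := fun p hp v hv => by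
    simpa using (P p.1).le ((hD p).1 hp) hv
  refine ⟨D, ⟨⟨fun p hp => ⟨hPsize _ _ ((hD p).1 hp), fun v hv => (hleaf p hp v hv).1⟩, ?_⟩,
    ?_⟩, fun x => ?_⟩
  · rintro ⟨x, L⟩ hp ⟨y, M⟩ hq hne
    refine Finset.disjoint_left.2 fun e he he' => hne ?_
    obtain ⟨v, hv, rfl⟩ := mem_starEdges.1 he
    obtain ⟨w, hw, hvw⟩ := mem_starEdges.1 he'
    have hx : o s(x, v) = x := (hleaf _ hp v hv).2
    have hy : o s(y, w) = y := (hleaf _ hq w hw).2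
    obtain rfl : y = x := by rw [← hy, hvw, hx]
    obtain rfl : w = v := Sym2.congr_right.1 hvw
    exact Prod.ext rfl ((P y).eq_of_mem_parts ((hD _).1 hp) ((hD _).1 hq) hv hw)
  · intro e he
    obtain ⟨v, hv⟩ := Sym2.mem_iff_exists.1 (ho e)
    generalize hx : o e = x at hv
    subst hv
    obtain ⟨L, hL, hvL⟩ := (P x).exists_mem (s := {v | G.Adj x v ∧ o s(x, v) = x}) (a := v)
      (by simpa using ⟨he, hx⟩)
    exact ⟨(x, L), (hD _).2 hL, mem_starEdges.2 ⟨v, hvL, rfl⟩⟩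
  · have hfib : D.filter (·.1 = x) =
        (P x).parts.map ⟨Prod.mk x, Prod.mk_right_injective x⟩ := by
      ext ⟨y, L⟩
      simp only [mem_filter, hD, mem_map, Function.Embedding.coeFn_mk, Prod.mk.injEq]
      constructor
      · rintro ⟨hL, rfl⟩
        exact ⟨L, hL, rfl, rfl⟩
      · rintro ⟨L, hL, rfl, rfl⟩
        exact ⟨hL, rfl⟩
    rw [hfib, card_map, hPcard]

end SimpleGraph

/-- for a `k`-precentral function `γ` on `G`, a `k`-star decomposition of `G`
with exactly `γ x` stars centred at each vertex `x` exists iff `Δ_T ≥ 0` for every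
`T ⊆ V(G)`. -/
theorem stmt4 {V : Type*} [Fintype V] [DecidableEq V] (k : ℕ) (hk : 2 ≤ k)
    (G : SimpleGraph V) (γ : V → ℕ)
    (hγ : k * ∑ x, γ x = G.edgeSet.ncard) :
    (∃ D : Finset (V × Finset V), IsStarDecompOn G k D ∧
        ∀ x : V, (D.filter (fun p => p.1 = x)).card = γ x) ↔
      ∀ T : Finset V, 0 ≤ starDelta G k γ T := by
  classical
  refine ⟨fun ⟨D, hD, hcount⟩ => hD.1.starDelta_nonneg hcount, fun hΔ => ?_⟩
  have hsum : ∑ x, k * γ x = #G.edgeFinset := by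
    rw [← mul_sum, hγ, ← SimpleGraph.coe_edgeFinset, Set.ncard_coe_finset]
  have hdeficiency : ∀ T, ∑ x ∈ T, k * γ x ≤ #(G.edgesMeeting T) := fun T => by
    rw [← mul_sum]
    exact (G.starDelta_nonneg_iff k γ T).1 (hΔ T)
  obtain ⟨o, ho, hfib⟩ := G.exists_orientation_card_fiber_eq (k * γ ·) hsum hdeficiency
  exact G.exists_starDecomp_of_card_out_neighbors (by omega) γ o ho fun x =>
    (G.card_edge_fiber_eq_card_out_neighbors ho x).symm.trans (hfib x)
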